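/- If P = (x_0, e_1, …, e_{p_0}, x_1, e_{p_0+1}, …, x_n) is a closed dynamic H-trail in an H-colored multigraph G, then the sequence C obtained by replacing each edge e = x_i x_{i+1} of P by the pair of vertices f(x_i,e), f(x_{i+1},e) is a cycle in L_2^H(G); moreover C alternates between edges of E(L_2^H(G))\M_J and edges of the joint matching M_J. -/

import Mathlib

namespace DynH

/-- A multigraph without loops: each edge `e` has two distinct endpoints
`G.fst e` and `G.snd e`. Parallel edges are allowed since `E` is an abstract
edge type. -/
structure Multigraph (V E : Type) where
  fst : E → V
  snd : E → V
  loopless : ∀ e, fst e ≠ snd e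

variable {V E C : Type}

namespace Multigraph

/-- The vertex `x` is incident with the edge `e`. -/
def inc (G : Multigraph V E) (x : V) (e : E) : Prop := G.fst e = x ∨ G.snd e = x

/-- The edge `e` joins the vertices `x` and `y`. -/
def joins (G : Multigraph V E) (e : E) (x y : V) : Prop :=
  (G.fst e = x ∧ G.snd e = y) ∨ (G.fst e = y ∧ G.snd e = x)

/-- `e` and `g` have the same pair of end vertices. -/
def parallel (G : Multigraph V E) (e g : E) : Prop :=
  (G.fst e = G.fst g ∧ G.snd e = G.snd g) ∨ (G.fst e = G.snd g ∧ G.snd e = G.fst g)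

end Multigraph

instance Multigraph.decInc (G : Multigraph V E) [DecidableEq V] :
    ∀ (x : V) (e : E), Decidable (G.inc x e) := fun x e => by
  unfold Multigraph.inc; infer_instance

/-- The underlying simple graph of a multigraph (used to express connectedness). -/
def SupportGraph (G : Multigraph V E) : SimpleGraph V where
  Adj x y := x ≠ y ∧ ∃ e, G.joins e x y
  symm := ⟨by
    rintro x y ⟨hxy, e, he⟩
    exact ⟨hxy.symm, e, he.symm⟩⟩
  loopless := ⟨fun x h => h.1 rfl⟩

/-- Vertices of `L_2^H(G)`: the incidences `f(x,e)`. -/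
def L2V (G : Multigraph V E) : Type := {p : V × E // G.inc p.1 p.2}

instance (G : Multigraph V E) [DecidableEq V] [DecidableEq E] : DecidableEq (L2V G) := by
  unfold L2V; infer_instance

instance (G : Multigraph V E) [Fintype V] [Fintype E] [DecidableEq V] : Fintype (L2V G) := by
  unfold L2V; infer_instance

/-- Adjacency of `L_2^H(G)` (one-sided; it is symmetrized below, which changes
nothing when `adjH` is symmetric). -/
def L2Adj (G : Multigraph V E) (adjH : C → C → Prop) (c : E → C) (p q : L2V G) : Prop :=
  (p.val.2 = q.val.2 ∧ p.val.1 ≠ q.val.1)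
  ∨ (p.val.1 = q.val.1 ∧ p.val.2 ≠ q.val.2 ∧ adjH (c p.val.2) (c q.val.2))
  ∨ (p.val.1 ≠ q.val.1 ∧ p.val.2 ≠ q.val.2 ∧ G.parallel p.val.2 q.val.2)

/-- The auxiliary simple graph `L_2^H(G)`. -/
def L2Graph (G : Multigraph V E) (adjH : C → C → Prop) (c : E → C) :
    SimpleGraph (L2V G) where
  Adj p q := L2Adj G adjH c p q ∨ L2Adj G adjH c q p
  symm := ⟨fun _ _ h => Or.symm h⟩
  loopless := ⟨fun p h => by
    rcases h with h | h <;> rcases h with ⟨_, h⟩ | ⟨_, h, _⟩ | ⟨h, _⟩ <;> exact h rfl⟩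

/-- The joint matching `M_J = { f(x,e)f(y,e) : e = xy ∈ E(G) }` of `L_2^H(G)`. -/
def MJ (G : Multigraph V E) : Set (Sym2 (L2V G)) :=
  {s | ∃ p q : L2V G, s = s(p, q) ∧ p ≠ q ∧ p.val.2 = q.val.2}

/-- A matching of a simple graph, given as a set of edges. -/
def IsMatchingSet {α : Type} (Gr : SimpleGraph α) (M : Set (Sym2 α)) : Prop :=
  M ⊆ Gr.edgeSet ∧ ∀ v : α, ∀ s ∈ M, ∀ t ∈ M, v ∈ s → v ∈ t → s = t

/-- A perfect matching of a simple graph, given as a set of edges. -/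
def IsPerfectMatchingSet {α : Type} (Gr : SimpleGraph α) (M : Set (Sym2 α)) : Prop :=
  IsMatchingSet Gr M ∧ ∀ v : α, ∃ s ∈ M, v ∈ s

/-- Every entry `(x, y, e)` of the list records a traversal of an edge `e`
joining `x` and `y` (from `x` to `y`). -/
def GoodEntries (G : Multigraph V E) (L : List (V × V × E)) : Prop :=
  ∀ t ∈ L, G.joins t.2.2 t.1 t.2.1

/-- The list of edges underlying a list of edge traversals. -/
def edgesOf (L : List (V × V × E)) : List E := L.map fun t => t.2.2

/-- Allowed consecutive pair in a dynamic `H`-trail: either a transition through a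
common vertex with colors adjacent in `H`, or a lane change between parallel edges. -/
def DynStep (G : Multigraph V E) (adjH : C → C → Prop) (c : E → C)
    (a b : V × V × E) : Prop :=
  (a.2.1 = b.1 ∧ adjH (c a.2.2) (c b.2.2))
  ∨ (a.1 = b.1 ∧ a.2.1 = b.2.1 ∧ a.2.2 ≠ b.2.2 ∧ G.parallel a.2.2 b.2.2)

/-- Allowed consecutive pair in an `H`-trail: transition through a common vertex
with colors adjacent in `H`. -/
def HStep (adjH : C → C → Prop) (c : E → C) (a b : V × V × E) : Prop :=
  a.2.1 = b.1 ∧ adjH (c a.2.2) (c b.2.2)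

/-- A closed dynamic `H`-trail, encoded as the cyclic list of its edge traversals. -/
def IsClosedDynHTrail (G : Multigraph V E) (adjH : C → C → Prop) (c : E → C)
    (L : List (V × V × E)) : Prop :=
  L ≠ [] ∧ (edgesOf L).Nodup ∧ GoodEntries G L ∧
    ∀ p ∈ L.zip (L.rotate 1), DynStep G adjH c p.1 p.2

/-- A closed `H`-trail, encoded as the cyclic list of its edge traversals. -/
def IsClosedHTrail (G : Multigraph V E) (adjH : C → C → Prop) (c : E → C)
    (L : List (V × V × E)) : Prop :=
  L ≠ [] ∧ (edgesOf L).Nodup ∧ GoodEntries G L ∧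
    ∀ p ∈ L.zip (L.rotate 1), HStep adjH c p.1 p.2

/-- A (non-closed) dynamic `H`-trail. -/
def IsDynHTrail (G : Multigraph V E) (adjH : C → C → Prop) (c : E → C)
    (L : List (V × V × E)) : Prop :=
  L ≠ [] ∧ (edgesOf L).Nodup ∧ GoodEntries G L ∧
    ∀ p ∈ L.zip L.tail, DynStep G adjH c p.1 p.2

/-- A (non-closed) `H`-trail. -/
def IsHTrail (G : Multigraph V E) (adjH : C → C → Prop) (c : E → C)
    (L : List (V × V × E)) : Prop :=
  L ≠ [] ∧ (edgesOf L).Nodup ∧ GoodEntries G L ∧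
    ∀ p ∈ L.zip L.tail, HStep adjH c p.1 p.2

/-- A cycle in `L_2^H(G)` (as a cyclic list of distinct vertices) which alternates
between edges of the joint matching `M_J` (at even positions) and edges of
`E(L_2^H(G)) \ M_J` (at odd positions). -/
def IsAltCycle (G : Multigraph V E) (adjH : C → C → Prop) (c : E → C)
    (vs : List (L2V G)) : Prop :=
  vs ≠ [] ∧ vs.Nodup ∧ 3 ≤ vs.length ∧
    ∀ k : Fin vs.length,
      (L2Graph G adjH c).Adj (vs.get k)
        (vs.get ⟨(k.val + 1) % vs.length, Nat.mod_lt _ (Nat.lt_of_le_of_lt (Nat.zero_le _) k.isLt)⟩) ∧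
      (s(vs.get k,
          vs.get ⟨(k.val + 1) % vs.length,
            Nat.mod_lt _ (Nat.lt_of_le_of_lt (Nat.zero_le _) k.isLt)⟩) ∈ MJ G ↔ k.val % 2 = 0)

/-- The simple graph `G_x` on the edges of `G` incident with `x`; two such edges are
adjacent iff their colors are adjacent in `H`. (Symmetrized; this changes nothing
when `adjH` is symmetric.) -/
def GxGraph (G : Multigraph V E) (adjH : C → C → Prop) (c : E → C) (x : V) :
    SimpleGraph {e : E // G.inc x e} where
  Adj a b := a ≠ b ∧ (adjH (c a.val) (c b.val) ∨ adjH (c b.val) (c a.val))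
  symm := ⟨by rintro a b ⟨hab, h⟩; exact ⟨hab.symm, h.symm⟩⟩
  loopless := ⟨fun a h => h.1 rfl⟩

end DynH

/-!
Write the closed dynamic `H`-trail as traversals `(x_i, x_{i+1}, e_i)`. The two incidences
`f(x_i, e_i), f(x_{i+1}, e_i)` share the edge `e_i` and have distinct vertices (`G` is loopless),
so they are joined by an edge of `M_J`. The incidence `f(x_{i+1}, e_i)` and the first incidence
of the next traversal have distinct edges (a trail repeats no edge), so their edge is not in
`M_J`; it exists either through the common vertex `x_{i+1}`, when `c(e_i) c(e_{i+1}) ∈ E(H)`, or,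
at a lane change, because `e_i` and `e_{i+1}` are parallel and the two vertices differ.
Distinct edges of the trail give distinct incidences, so the closed walk is a cycle.
-/

namespace DynH

section

variable {V E C : Type} {G : Multigraph V E} {adjH : C → C → Prop} {c : E → C}

theorem Multigraph.joins.ne {e : E} {x y : V} (h : G.joins e x y) : x ≠ y := by
  rintro rfl
  rcases h with ⟨h₁, h₂⟩ | ⟨h₁, h₂⟩ <;> exact G.loopless e (h₁.trans h₂.symm)

theorem mem_MJ_iff {p q : L2V G} (hpq : p ≠ q) : s(p, q) ∈ MJ G ↔ p.val.2 = q.val.2 := by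
  refine ⟨?_, fun h => ⟨p, q, rfl, hpq, h⟩⟩
  rintro ⟨p', q', hs, -, he⟩
  rcases Sym2.eq_iff.mp hs with ⟨rfl, rfl⟩ | ⟨rfl, rfl⟩
  exacts [he, he.symm]

theorem L2Graph.adj_of_snd_eq {p q : L2V G} (he : p.val.2 = q.val.2) (hv : p.val.1 ≠ q.val.1) :
    (L2Graph G adjH c).Adj p q :=
  Or.inl (Or.inl ⟨he, hv⟩)

theorem L2Graph.adj_of_dynStep {a b : V × V × E} (hab : DynStep G adjH c a b)
    (hb : G.joins b.2.2 b.1 b.2.1) (he : a.2.2 ≠ b.2.2) {p q : L2V G}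
    (hp : p.val = (a.2.1, a.2.2)) (hq : q.val = (b.1, b.2.2)) :
    (L2Graph G adjH c).Adj p q := by
  rcases hab with ⟨hv, hc⟩ | ⟨-, hv, -, hpar⟩
  · exact Or.inl (Or.inr (Or.inl (by simp only [hp, hq]; exact ⟨hv, he, hc⟩)))
  · refine Or.inl (Or.inr (Or.inr ?_))
    simp only [hp, hq, hv]
    exact ⟨hb.ne.symm, he, hpar⟩

namespace IsClosedDynHTrail

variable {L : List (V × V × E)}

theorem joins_getElem (hL : IsClosedDynHTrail G adjH c L) (i : ℕ) (hi : i < L.length) :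
    G.joins L[i].2.2 L[i].1 L[i].2.1 :=
  hL.2.2.1 _ (List.getElem_mem hi)

theorem edge_getElem_inj (hL : IsClosedDynHTrail G adjH c L) {i j : ℕ} (hi : i < L.length)
    (hj : j < L.length) (h : L[i].2.2 = L[j].2.2) : i = j := by
  have hnd : (edgesOf L).Nodup := hL.2.1
  exact (hnd.getElem_inj_iff (hi := by simpa [edgesOf]) (hj := by simpa [edgesOf])).mp
    (by simpa [edgesOf] using h)

theorem dynStep_getElem (hL : IsClosedDynHTrail G adjH c L) (i : ℕ) (hi : i < L.length) :
    DynStep G adjH c L[i] (L[(i + 1) % L.length]'(Nat.mod_lt _ (by omega))) := by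
  have hmem : (L.zip (L.rotate 1))[i]'(by simpa) ∈ L.zip (L.rotate 1) := List.getElem_mem _
  simp only [List.getElem_zip, List.getElem_rotate] at hmem
  exact hL.2.2.2 _ hmem

/-- A single traversal cannot follow itself: it changes the vertex and keeps the edge. -/
theorem two_le_length (hL : IsClosedDynHTrail G adjH c L) : 2 ≤ L.length := by
  have hpos : 0 < L.length := List.length_pos_iff.mpr hL.1
  by_contra! h
  have h1 : L.length = 1 := by omega
  have hstep := hL.dynStep_getElem 0 hpos
  simp only [h1, Nat.mod_self] at hstep
  rcases hstep with ⟨hv, -⟩ | ⟨-, -, he, -⟩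
  exacts [(hL.joins_getElem 0 hpos).ne hv.symm, he rfl]

end IsClosedDynHTrail

/-- `vs` lists `f(x, e), f(y, e)` for the successive traversals `(x, y, e)` of `L`. -/
structure IsIncidenceSeq (L : List (V × V × E)) (vs : List (L2V G)) : Prop where
  length_eq : 2 * L.length = vs.length
  getElem_even (i : ℕ) (hi : i < L.length) : vs[2 * i].val = (L[i].1, L[i].2.2)
  getElem_odd (i : ℕ) (hi : i < L.length) : vs[2 * i + 1].val = (L[i].2.1, L[i].2.2)

namespace IsIncidenceSeq

variable {L : List (V × V × E)} {vs : List (L2V G)}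

theorem nodup (hV : IsIncidenceSeq L vs) (hL : IsClosedDynHTrail G adjH c L) : vs.Nodup := by
  have hlen := hV.length_eq
  refine List.nodup_iff_injective_getElem.mpr fun ⟨a, ha⟩ ⟨b, hb⟩ hab => ?_
  have hv := congrArg Subtype.val hab
  obtain ⟨i, rfl | rfl⟩ := Nat.even_or_odd' a <;>
    obtain ⟨j, rfl | rfl⟩ := Nat.even_or_odd' b <;>
    simp (disch := omega) only [hV.getElem_even, hV.getElem_odd, Prod.mk.injEq] at hv <;>
    obtain rfl := hL.edge_getElem_inj (by omega) (by omega) hv.2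
  · rfl
  · exact absurd hv.1 (hL.joins_getElem i (by omega)).ne
  · exact absurd hv.1.symm (hL.joins_getElem i (by omega)).ne
  · rfl

theorem adj_two_mul_and_mem_MJ (hV : IsIncidenceSeq L vs) (hL : IsClosedDynHTrail G adjH c L)
    (i : ℕ) (h : 2 * i + 1 < vs.length) :
    (L2Graph G adjH c).Adj vs[2 * i] vs[2 * i + 1] ∧ s(vs[2 * i], vs[2 * i + 1]) ∈ MJ G := by
  have hi : i < L.length := by have := hV.length_eq; omega
  have he : vs[2 * i].val.2 = vs[2 * i + 1].val.2 := by
    rw [hV.getElem_even i hi, hV.getElem_odd i hi]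
  have hv : vs[2 * i].val.1 ≠ vs[2 * i + 1].val.1 := by
    rw [hV.getElem_even i hi, hV.getElem_odd i hi]
    exact (hL.joins_getElem i hi).ne
  have hadj := L2Graph.adj_of_snd_eq (adjH := adjH) (c := c) he hv
  exact ⟨hadj, (mem_MJ_iff hadj.ne).mpr he⟩

theorem adj_two_mul_add_one_and_not_mem_MJ (hV : IsIncidenceSeq L vs)
    (hL : IsClosedDynHTrail G adjH c L) (i : ℕ) (h : 2 * i + 1 < vs.length) :
    (L2Graph G adjH c).Adj vs[2 * i + 1] (vs[(2 * i + 2) % vs.length]'(Nat.mod_lt _ (by omega))) ∧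
      s(vs[2 * i + 1], vs[(2 * i + 2) % vs.length]'(Nat.mod_lt _ (by omega))) ∉ MJ G := by
  have hi : i < L.length := by have := hV.length_eq; omega
  have hj : (i + 1) % L.length < L.length := Nat.mod_lt _ (by omega)
  have hsucc : (2 * i + 2) % vs.length = 2 * ((i + 1) % L.length) := by
    rw [← hV.length_eq, show 2 * i + 2 = 2 * (i + 1) by ring, Nat.mul_mod_mul_left]
  simp only [hsucc]
  have hne : (i + 1) % L.length ≠ i := by
    have := hL.two_le_length
    rcases (by omega : i + 1 < L.length ∨ i + 1 = L.length) with h | h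
    · rw [Nat.mod_eq_of_lt h]; omega
    · rw [h, Nat.mod_self]; omega
  have he : L[i].2.2 ≠ L[(i + 1) % L.length].2.2 := fun h =>
    hne (hL.edge_getElem_inj hi hj h).symm
  have hadj := L2Graph.adj_of_dynStep (hL.dynStep_getElem i hi) (hL.joins_getElem _ hj) he
    (hV.getElem_odd i hi) (hV.getElem_even _ hj)
  refine ⟨hadj, ?_⟩
  rw [mem_MJ_iff hadj.ne, hV.getElem_odd i hi, hV.getElem_even _ hj]
  exact he

end IsIncidenceSeq

end

/-- If `P` is a closed dynamic `H`-trail in `G` (encoded by the list `L` of its edge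
traversals `(x_i, x_{i+1}, e)`), then the sequence `C` of vertices of `L_2^H(G)`
obtained by replacing each traversal of an edge `e = x_i x_{i+1}` by the pair
`f(x_i,e), f(x_{i+1},e)` is a cycle in `L_2^H(G)`, and it alternates between edges
of the joint matching `M_J` and edges of `E(L_2^H(G)) \ M_J`. -/
theorem closedDynHTrail_to_altCycle {V E C : Type} (G : Multigraph V E)
    (adjH : C → C → Prop) (c : E → C)
    (L : List (V × V × E)) (hL : IsClosedDynHTrail G adjH c L)
    (vs : List (L2V G)) (hlen : vs.length = 2 * L.length)
    (hcorr : ∀ i (hi : i < L.length),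
      (vs.get ⟨2 * i, by omega⟩).val = ((L.get ⟨i, hi⟩).1, (L.get ⟨i, hi⟩).2.2) ∧
      (vs.get ⟨2 * i + 1, by omega⟩).val = ((L.get ⟨i, hi⟩).2.1, (L.get ⟨i, hi⟩).2.2)) :
    IsAltCycle G adjH c vs := by
  have hV : IsIncidenceSeq L vs :=
    ⟨hlen.symm, fun i hi => (hcorr i hi).1, fun i hi => (hcorr i hi).2⟩
  have h2 := hL.two_le_length
  refine ⟨List.ne_nil_of_length_pos (by omega), hV.nodup hL, by omega, fun ⟨k, hk⟩ => ?_⟩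
  simp only [List.get_eq_getElem]
  obtain ⟨i, rfl | rfl⟩ := Nat.even_or_odd' k
  · have hsucc : (2 * i + 1) % vs.length = 2 * i + 1 := Nat.mod_eq_of_lt (by omega)
    simp only [hsucc]
    obtain ⟨hadj, hM⟩ := hV.adj_two_mul_and_mem_MJ hL i (by omega)
    exact ⟨hadj, iff_of_true hM (by omega)⟩
  · obtain ⟨hadj, hM⟩ := hV.adj_two_mul_add_one_and_not_mem_MJ hL i hk
    exact ⟨hadj, iff_of_false hM (by omega)⟩

end DynH
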